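/- arXiv:2002.03217 — 2 statements merged into one kernel-verified Lean document; each statement's English description precedes it below -/
import Mathlib

section
/- Let (W_{1,i})_{i≥1} be defined recursively by W_{1,n} = (1 - Σ_{i=1}^{n-1} W_{1,i} A_i) · r A_n where A_i ∈ {0,1} and r ∈ ℝ. Then for all n ≥ 1, W_{1,n} = r A_n (1 - r)^{N_{1,n-1}}, where N_{1,n-1} = Σ_{i=1}^{n-1} A_i. -/
/-- Closed form of the W-decorrelated estimator's adaptive weights in a two-arm
bandit: if `W n = (1 - ∑_{i=1}^{n-1} W i * A i) * (r * A n)` for a binary sequence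
`A`, then `W n = r * A n * (1 - r) ^ (∑_{i=1}^{n-1} A i)`. -/
theorem stmt0 (A : ℕ → ℕ) (hA : ∀ i, A i ≤ 1) (r : ℝ) (W : ℕ → ℝ)
    (hW : ∀ n, 1 ≤ n →
      W n = (1 - ∑ i ∈ Finset.Ico 1 n, W i * (A i : ℝ)) * (r * (A n : ℝ))) :
    ∀ n, 1 ≤ n →
      W n = r * (A n : ℝ) * (1 - r) ^ (∑ i ∈ Finset.Ico 1 n, A i) := by
  have key : ∀ n, 1 ≤ n →
      (1 - ∑ i ∈ Finset.Ico 1 n, W i * (A i : ℝ))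
        = (1 - r) ^ (∑ i ∈ Finset.Ico 1 n, A i) := by
    intro n hn
    induction n with
    | zero => omega
    | succ m ih =>
      rcases Nat.eq_or_lt_of_le hn with h | h
      · simp [← h]
      · have hm : 1 ≤ m := by omega
        have ihm := ih hm
        rw [Finset.sum_Ico_succ_top hm, Finset.sum_Ico_succ_top hm, hW m hm, ihm,
          pow_add]
        have hAm := hA m; interval_cases h : A m <;> push_cast [h] <;> linarith [ihm]
  intro n hn
  rw [hW n hn, key n hn]; ring
end

section
/- Let Z_1, Z_2, Z_3 be i.i.d. N(0,1) and ε ∈ (0,1). The random variable Y = √(1/(3−ε))(Z_1 + √(2−ε) Z_3)·1{Z_1 > Z_2} + √(1/(1+ε))(Z_1 + √ε Z_3)·1{Z_1 < Z_2} has variance 1 but is not normally distributed. -/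
open MeasureTheory ProbabilityTheory

open Real

namespace Stmt12Aux

noncomputable def gν : Measure ℝ := gaussianReal 0 1

instance : IsProbabilityMeasure gν := by unfold gν; infer_instance

lemma pdf_eq (x : ℝ) : gaussianPDFReal 0 1 x = (√(2 * π))⁻¹ * rexp (-x ^ 2 / 2) := by
  simp [gaussianPDFReal]

lemma gν_eq : gν = (volume : Measure ℝ).withDensity
    (fun x => ((gaussianPDFReal 0 1 x).toNNReal : ENNReal)) := by
  rw [gν, gaussianReal_of_var_ne_zero 0 one_ne_zero]
  rfl

lemma integral_gν (g : ℝ → ℝ) :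
    ∫ x, g x ∂gν = ∫ x, gaussianPDFReal 0 1 x * g x := by
  rw [gν_eq, integral_withDensity_eq_integral_smul (measurable_gaussianPDFReal 0 1).real_toNNReal]
  congr 1
  funext x
  rw [NNReal.smul_def, Real.coe_toNNReal _ (gaussianPDFReal_nonneg 0 1 x), smul_eq_mul]

lemma integrable_pow_gν (k : ℕ) : Integrable (fun x => x ^ k) gν := by
  rw [gν_eq, integrable_withDensity_iff ((measurable_gaussianPDFReal 0 1).real_toNNReal.coe_nnreal_ennreal)
    (ae_of_all _ fun x => ENNReal.coe_lt_top)]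
  have : (fun x : ℝ => x ^ k * (((gaussianPDFReal 0 1 x).toNNReal : ENNReal)).toReal)
      = fun x : ℝ => (√(2 * π))⁻¹ * (x ^ (k : ℝ) * rexp (-(1/2) * x ^ 2)) := by
    funext x
    rw [ENNReal.coe_toReal, Real.coe_toNNReal _ (gaussianPDFReal_nonneg 0 1 x), pdf_eq,
      rpow_natCast]
    ring_nf
  rw [this]
  exact (integrable_rpow_mul_exp_neg_mul_sq (by norm_num) (lt_of_lt_of_le neg_one_lt_zero (Nat.cast_nonneg k))).const_mul _


lemma halfline (q : ℕ) :
    ∫ x in Set.Ioi (0:ℝ), x ^ q * rexp (-x ^ 2 / 2)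
      = (1/2 : ℝ) ^ (-((q:ℝ)+1)/2) * (1/2) * Real.Gamma (((q:ℝ)+1)/2) := by
  rw [← integral_rpow_mul_exp_neg_mul_rpow two_pos
    (lt_of_lt_of_le neg_one_lt_zero (Nat.cast_nonneg q)) (by norm_num : (0:ℝ) < 1/2)]
  refine setIntegral_congr_fun measurableSet_Ioi fun x hx => ?_
  rw [rpow_natCast]
  congr 1
  rw [show ((2:ℝ)) = ((2:ℕ):ℝ) by norm_num, rpow_natCast]
  ring

lemma sqrt_two_pi_pos : (0:ℝ) < √(2 * π) := Real.sqrt_pos.mpr (by positivity)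

lemma integral_pow_gν_eq (k : ℕ) :
    ∫ x, x ^ k ∂gν = (√(2 * π))⁻¹ * ∫ x, x ^ k * rexp (-x ^ 2 / 2) := by
  rw [integral_gν, ← integral_const_mul]
  congr 1; funext x; rw [pdf_eq]; ring

lemma even_pow_integral (k : ℕ) (hk : Even k) :
    ∫ x : ℝ, x ^ k * rexp (-x ^ 2 / 2) = 2 * ∫ x in Set.Ioi (0:ℝ), x ^ k * rexp (-x ^ 2 / 2) := by
  rw [← integral_comp_abs (f := fun t => t ^ k * rexp (-t ^ 2 / 2))]
  congr 1; funext x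
  rw [hk.pow_abs, sq_abs]

lemma gamma_half : Real.Gamma (1/2) = √π := Real.Gamma_one_half_eq

lemma gamma_3half : Real.Gamma (3/2) = √π / 2 := by
  rw [show (3/2 : ℝ) = 1/2 + 1 by norm_num, Real.Gamma_add_one (by norm_num), gamma_half]
  ring

lemma gamma_5half : Real.Gamma (5/2) = 3 * √π / 4 := by
  rw [show (5/2 : ℝ) = 3/2 + 1 by norm_num, Real.Gamma_add_one (by norm_num), gamma_3half]
  ring

lemma half_rpow (y : ℝ) : (1/2 : ℝ) ^ (-y) = 2 ^ y := by
  rw [one_div, Real.inv_rpow (by norm_num : (0:ℝ) ≤ 2), ← Real.rpow_neg (by norm_num : (0:ℝ) ≤ 2),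
    neg_neg]

lemma two_rpow_3half : (2:ℝ) ^ ((3:ℝ)/2) = 2 * √2 := by
  rw [show ((3:ℝ)/2) = 1 + 1/2 by norm_num, Real.rpow_add two_pos, Real.rpow_one,
    ← Real.sqrt_eq_rpow]

lemma two_rpow_5half : (2:ℝ) ^ ((5:ℝ)/2) = 4 * √2 := by
  rw [show ((5:ℝ)/2) = 2 + 1/2 by norm_num, Real.rpow_add two_pos, ← Real.sqrt_eq_rpow]
  norm_num

lemma M0 : ∫ (_ : ℝ), (1:ℝ) ∂gν = 1 := by simp

lemma M2 : ∫ x, x ^ 2 ∂gν = 1 := by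
  rw [integral_pow_gν_eq, even_pow_integral 2 (by decide), halfline]
  have h1 : -((2:ℕ):ℝ)/2 - 1/2 = -(3/2 : ℝ) := by norm_num
  rw [show (-(((2:ℕ):ℝ)+1)/2) = -((3:ℝ)/2) by norm_num, half_rpow, two_rpow_3half,
    show ((((2:ℕ):ℝ)+1)/2) = (3/2 : ℝ) by norm_num, gamma_3half,
    Real.sqrt_mul (by norm_num : (0:ℝ) ≤ 2)]
  have h2 : √2 * √2 = 2 := Real.mul_self_sqrt (by norm_num)
  have hπ : (0:ℝ) < √π := Real.sqrt_pos.mpr Real.pi_pos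
  field_simp

lemma M4 : ∫ x, x ^ 4 ∂gν = 3 := by
  rw [integral_pow_gν_eq, even_pow_integral 4 (by decide), halfline]
  rw [show (-(((4:ℕ):ℝ)+1)/2) = -((5:ℝ)/2) by norm_num, half_rpow, two_rpow_5half,
    show ((((4:ℕ):ℝ)+1)/2) = (5/2 : ℝ) by norm_num, gamma_5half,
    Real.sqrt_mul (by norm_num : (0:ℝ) ≤ 2)]
  have h2 : √2 * √2 = 2 := Real.mul_self_sqrt (by norm_num)
  have hπ : (0:ℝ) < √π := Real.sqrt_pos.mpr Real.pi_pos
  field_simp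

lemma gν_map_neg : gν.map (fun x => -x) = gν := by
  have h := gaussianReal_map_const_mul (μ := 0) (v := 1) (-1)
  have h1 : (fun x : ℝ => -1 * x) = fun x : ℝ => -x := by funext x; ring
  have h2 : (⟨(-1:ℝ)^2, sq_nonneg _⟩ : NNReal) * 1 = 1 := by
    ext; norm_num
  rw [h1, mul_zero] at h
  unfold gν
  convert h using 2
  ext; simp

lemma Modd (k : ℕ) (hk : Odd k) : ∫ x, x ^ k ∂gν = 0 := by
  have h : ∫ x, x ^ k ∂gν = ∫ x, x ^ k ∂(gν.map (fun x => -x)) := by rw [gν_map_neg]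
  rw [integral_map measurable_neg.aemeasurable
    (by fun_prop : Measurable fun x : ℝ => x ^ k).aestronglyMeasurable] at h
  simp only [hk.neg_pow] at h
  rw [integral_neg] at h
  linarith

lemma M1 : ∫ x, x ^ 1 ∂gν = 0 := Modd 1 odd_one
lemma M3 : ∫ x, x ^ 3 ∂gν = 0 := Modd 3 (by decide)

noncomputable def gπ : Measure (ℝ × ℝ) := gν.prod gν
instance : IsProbabilityMeasure gπ := by unfold gπ; infer_instance

noncomputable def χ (p : ℝ × ℝ) : ℝ := if p.2 < p.1 then 1 else 0
noncomputable def ψ (p : ℝ × ℝ) : ℝ := if p.1 < p.2 then 1 else 0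

lemma meas_χ : Measurable χ :=
  Measurable.ite (measurableSet_lt measurable_snd measurable_fst) measurable_const measurable_const
lemma meas_ψ : Measurable ψ :=
  Measurable.ite (measurableSet_lt measurable_fst measurable_snd) measurable_const measurable_const
lemma abs_χ_le (p : ℝ × ℝ) : |χ p| ≤ 1 := by unfold χ; split <;> norm_num
lemma abs_ψ_le (p : ℝ × ℝ) : |ψ p| ≤ 1 := by unfold ψ; split <;> norm_num

lemma int_pow_ind (j : ℕ) {e : ℝ × ℝ → ℝ} (he : Measurable e) (hbd : ∀ p, |e p| ≤ 1) :
    Integrable (fun p => p.1 ^ j * e p) gπ := by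
  have hb : Integrable (fun p : ℝ × ℝ => |p.1 ^ j| * 1) gπ :=
    (integrable_pow_gν j).abs.mul_prod (integrable_const 1)
  refine hb.mono' ((measurable_fst.pow_const j).mul he).aestronglyMeasurable ?_
  refine ae_of_all _ fun p => ?_
  rw [Real.norm_eq_abs, abs_mul, mul_one]
  exact mul_le_of_le_one_right (abs_nonneg _) (hbd p)

lemma int_snd_ind {e : ℝ × ℝ → ℝ} (he : Measurable e) (hbd : ∀ p, |e p| ≤ 1) :
    Integrable (fun p => p.2 * e p) gπ := by
  have hb : Integrable (fun p : ℝ × ℝ => (1:ℝ) * |p.2 ^ 1|) gπ :=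
    Integrable.mul_prod (μ := gν) (ν := gν) (f := fun _ : ℝ => (1:ℝ))
      (g := fun x : ℝ => |x ^ 1|) (integrable_const 1) (integrable_pow_gν 1).abs
  refine hb.mono' (measurable_snd.mul he).aestronglyMeasurable ?_
  refine ae_of_all _ fun p => ?_
  rw [Real.norm_eq_abs, abs_mul, one_mul, pow_one]
  exact mul_le_of_le_one_right (abs_nonneg _) (hbd p)

lemma diag_null : gπ {p : ℝ × ℝ | p.1 = p.2} = 0 := by
  have hm : MeasurableSet {p : ℝ × ℝ | p.1 = p.2} :=
    measurableSet_eq_fun measurable_fst measurable_snd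
  rw [gπ, Measure.prod_apply hm]
  have : ∀ x : ℝ, gν (Prod.mk x ⁻¹' {p : ℝ × ℝ | p.1 = p.2}) = 0 := by
    intro x
    have : Prod.mk x ⁻¹' {p : ℝ × ℝ | p.1 = p.2} = {x} := by
      ext y; simp [eq_comm]
    rw [this]
    exact gaussianReal_absolutelyContinuous 0 one_ne_zero Real.volume_singleton
  have h2 : ∀ x : ℝ, gν {x} = 0 := fun x =>
    gaussianReal_absolutelyContinuous 0 one_ne_zero Real.volume_singleton
  simp [this, h2]

lemma ae_off_diag : ∀ᵐ p ∂gπ, p.1 ≠ p.2 := by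
  rw [ae_iff]
  simpa using diag_null

lemma hJK (j : ℕ) :
    (∫ p, p.1 ^ j * χ p ∂gπ) + (∫ p, p.1 ^ j * ψ p ∂gπ) = ∫ x, x ^ j ∂gν := by
  rw [← integral_add (int_pow_ind j meas_χ abs_χ_le) (int_pow_ind j meas_ψ abs_ψ_le)]
  have h1 : (fun p : ℝ × ℝ => p.1 ^ j * χ p + p.1 ^ j * ψ p) =ᵐ[gπ] fun p => p.1 ^ j * 1 := by
    filter_upwards [ae_off_diag] with p hp
    rcases lt_or_gt_of_ne hp with h | h <;> simp [χ, ψ, h, not_lt_of_gt h]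
  rw [integral_congr_ae h1]
  have := integral_prod_mul (μ := gν) (ν := gν) (fun x : ℝ => x ^ j) (fun _ : ℝ => (1:ℝ))
  rw [gπ]
  rw [this]
  simp

lemma map_neg_neg : gπ.map (fun p : ℝ × ℝ => (-p.1, -p.2)) = gπ := by
  have h := Measure.map_prod_map (f := fun x : ℝ => -x) (g := fun x : ℝ => -x)
    gν gν measurable_neg measurable_neg
  rw [gν_map_neg] at h
  have h2 : Prod.map (fun x : ℝ => -x) (fun x : ℝ => -x) = fun p : ℝ × ℝ => (-p.1, -p.2) := by
    funext p; rfl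
  rw [h2] at h
  exact h.symm

lemma hJneg (j : ℕ) :
    ∫ p, p.1 ^ j * χ p ∂gπ = (-1) ^ j * ∫ p, p.1 ^ j * ψ p ∂gπ := by
  conv_lhs => rw [← map_neg_neg]
  rw [integral_map (f := fun p : ℝ × ℝ => p.1 ^ j * χ p) (by fun_prop) (((measurable_fst.pow_const j).mul meas_χ : Measurable fun p : ℝ × ℝ => p.1 ^ j * χ p).aestronglyMeasurable)]
  have : (fun p : ℝ × ℝ => (-p.1) ^ j * χ (-p.1, -p.2))
      = fun p : ℝ × ℝ => (-1) ^ j * (p.1 ^ j * ψ p) := by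
    funext p
    have : χ (-p.1, -p.2) = ψ p := by
      simp only [χ, ψ, neg_lt_neg_iff]
    rw [this, neg_pow]
    ring
  rw [this, integral_const_mul]

lemma Jχ_even (j : ℕ) (hj : Even j) :
    ∫ p, p.1 ^ j * χ p ∂gπ = (∫ x, x ^ j ∂gν) / 2 := by
  have h1 := hJK j
  have h2 := hJneg j
  rw [hj.neg_pow, one_pow, one_mul] at h2
  linarith

lemma Jψ_even (j : ℕ) (hj : Even j) :
    ∫ p, p.1 ^ j * ψ p ∂gπ = (∫ x, x ^ j ∂gν) / 2 := by
  have h1 := hJK j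
  have h2 := hJneg j
  rw [hj.neg_pow, one_pow, one_mul] at h2
  linarith

lemma Jψ_one : ∫ p, p.1 ^ 1 * ψ p ∂gπ = -∫ p, p.1 ^ 1 * χ p ∂gπ := by
  have h2 := hJneg 1
  rw [pow_one, neg_one_mul] at h2
  linarith

lemma swap_snd_χ : ∫ p, p.2 * χ p ∂gπ = -∫ p, p.1 ^ 1 * χ p ∂gπ := by
  have h := integral_prod_swap (μ := gν) (ν := gν) (fun p : ℝ × ℝ => p.1 ^ 1 * ψ p)
  have h1 : (fun p : ℝ × ℝ => (Prod.swap p).1 ^ 1 * ψ (Prod.swap p))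
      = fun p : ℝ × ℝ => p.2 * χ p := by
    funext p
    simp [ψ, χ, Prod.swap, pow_one]
  rw [h1] at h
  exact h.trans Jψ_one

lemma Jχ_one_pos : 0 < ∫ p, p.1 ^ 1 * χ p ∂gπ := by
  set J := ∫ p, p.1 ^ 1 * χ p ∂gπ with hJ
  have hg : ∀ p : ℝ × ℝ, 0 ≤ (p.1 - p.2) * χ p := by
    intro p
    unfold χ
    split
    · next h => nlinarith
    · simp
  have hint1 : Integrable (fun p : ℝ × ℝ => p.1 ^ 1 * χ p) gπ := int_pow_ind 1 meas_χ abs_χ_le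
  have hint2 : Integrable (fun p : ℝ × ℝ => p.2 * χ p) gπ := int_snd_ind meas_χ abs_χ_le
  have hint : Integrable (fun p : ℝ × ℝ => (p.1 - p.2) * χ p) gπ := by
    have : (fun p : ℝ × ℝ => (p.1 - p.2) * χ p)
        = fun p : ℝ × ℝ => p.1 ^ 1 * χ p - p.2 * χ p := by funext p; ring
    rw [this]
    exact hint1.sub hint2
  have hval : ∫ p, (p.1 - p.2) * χ p ∂gπ = 2 * J := by
    have : (fun p : ℝ × ℝ => (p.1 - p.2) * χ p)
        = fun p : ℝ × ℝ => p.1 ^ 1 * χ p - p.2 * χ p := by funext p; ring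
    rw [this, integral_sub hint1 hint2, swap_snd_χ, ← hJ]
    ring
  have hJnonneg : 0 ≤ J := by
    have := integral_nonneg (μ := gπ) (f := fun p : ℝ × ℝ => (p.1 - p.2) * χ p) hg
    rw [hval] at this
    linarith
  rcases hJnonneg.lt_or_eq with h | h
  · exact h
  · exfalso
    have hzero : ∫ p, (p.1 - p.2) * χ p ∂gπ = 0 := by rw [hval, ← h]; ring
    have hae : (fun p : ℝ × ℝ => (p.1 - p.2) * χ p) =ᵐ[gπ] 0 :=
      (integral_eq_zero_iff_of_nonneg hg hint).mp hzero
    rw [Filter.EventuallyEq, ae_iff] at hae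
    have hnull : gπ {p : ℝ × ℝ | p.2 < p.1} = 0 := by
      refine measure_mono_null (fun p hp => ?_) hae
      simp only [Set.mem_setOf_eq, Pi.zero_apply]
      have hp' : (0:ℝ) < p.1 - p.2 := sub_pos.mpr hp
      have hχ1 : χ p = 1 := if_pos hp
      rw [hχ1, mul_one]
      exact ne_of_gt hp'
    have haeχ : (fun p : ℝ × ℝ => p.1 ^ 0 * χ p) =ᵐ[gπ] 0 := by
      rw [Filter.EventuallyEq, ae_iff]
      refine measure_mono_null (fun p hp => ?_) hnull
      simp only [Set.mem_setOf_eq, Pi.zero_apply, pow_zero, one_mul] at hp ⊢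
      by_contra hlt
      exact hp (by rw [χ, if_neg hlt])
    have h0 : ∫ p, p.1 ^ 0 * χ p ∂gπ = 0 := by
      rw [integral_congr_ae haeχ]; simp
    have h12 : ∫ p, p.1 ^ 0 * χ p ∂gπ = 1/2 := by
      rw [Jχ_even 0 Even.zero]
      have : ∫ x : ℝ, x ^ 0 ∂gν = 1 := by simpa using M0
      rw [this]
    rw [h0] at h12
    norm_num at h12

/- general gaussian moments -/
lemma gauss_map (m : ℝ) (v : NNReal) :
    gaussianReal m v = gν.map (fun x => √(v:ℝ) * x + m) := by
  have h1 : gν.map (fun x => √(v:ℝ) * x) = gaussianReal 0 v := by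
    have h := gaussianReal_map_const_mul (μ := 0) (v := 1) (√(v:ℝ))
    have h2 : (⟨(√(v:ℝ))^2, sq_nonneg _⟩ : NNReal) * 1 = v := by
      ext; simp [Real.sq_sqrt v.2]
    rw [mul_zero] at h
    unfold gν
    convert h using 2
    ext; simp [Real.sq_sqrt v.2]
  have h3 : (gν.map (fun x => √(v:ℝ) * x)).map (fun x => x + m)
      = gν.map (fun x => √(v:ℝ) * x + m) := by
    rw [Measure.map_map (measurable_add_const m) (measurable_const_mul _)]
    rfl
  rw [← h3, h1, gaussianReal_map_add_const, zero_add]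

lemma integrable_affine_pow (k : ℕ) (s m : ℝ) :
    Integrable (fun x : ℝ => s * x ^ k + m) gν :=
  ((integrable_pow_gν k).const_mul s).add (integrable_const m)

lemma Gm1 (m : ℝ) (v : NNReal) : ∫ x, x ∂(gaussianReal m v) = m := by
  rw [gauss_map, integral_map (by fun_prop)
    (by fun_prop : Measurable fun x : ℝ => x).aestronglyMeasurable]
  have : (fun x : ℝ => √(v:ℝ) * x + m) = fun x : ℝ => √(v:ℝ) * x ^ 1 + m := by
    funext x; rw [pow_one]
  rw [this, integral_add ((integrable_pow_gν 1).const_mul _) (integrable_const m),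
    integral_const_mul, M1, integral_const]
  simp

lemma Gm2 (m : ℝ) (v : NNReal) : ∫ x, x ^ 2 ∂(gaussianReal m v) = m ^ 2 + v := by
  rw [gauss_map, integral_map (by fun_prop) (by fun_prop : Measurable fun x : ℝ => x ^ 2).aestronglyMeasurable]
  have : (fun x : ℝ => (√(v:ℝ) * x + m) ^ 2)
      = fun x : ℝ => (√(v:ℝ))^2 * x ^ 2 + ((2 * √(v:ℝ) * m) * x ^ 1 + m ^ 2) := by
    funext x; ring
  have I1 : Integrable (fun x : ℝ => 2 * √(v:ℝ) * m * x ^ 1 + m ^ 2) gν := by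
    exact ((integrable_pow_gν 1).const_mul _).add (integrable_const _)
  rw [this, integral_add ((integrable_pow_gν 2).const_mul _) I1,
    integral_add ((integrable_pow_gν 1).const_mul _) (integrable_const _),
    integral_const_mul, integral_const_mul, M1, M2, integral_const]
  simp [Real.sq_sqrt v.2]
  ring

lemma Gm4 (m : ℝ) (v : NNReal) :
    ∫ x, x ^ 4 ∂(gaussianReal m v) = m ^ 4 + 6 * m ^ 2 * v + 3 * (v:ℝ) ^ 2 := by
  rw [gauss_map, integral_map (by fun_prop) (by fun_prop : Measurable fun x : ℝ => x ^ 4).aestronglyMeasurable]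
  set s := √(v:ℝ) with hs
  have hsv : s ^ 2 = (v:ℝ) := Real.sq_sqrt v.2
  have : (fun x : ℝ => (s * x + m) ^ 4)
      = fun x : ℝ => s^4 * x ^ 4 + ((4*s^3*m) * x ^ 3 + ((6*s^2*m^2) * x ^ 2
          + ((4*s*m^3) * x ^ 1 + m ^ 4))) := by
    funext x; ring
  have I1 : Integrable (fun x : ℝ => 4*s*m^3 * x ^ 1 + m ^ 4) gν := by
    exact ((integrable_pow_gν 1).const_mul _).add (integrable_const _)
  have I2 : Integrable (fun x : ℝ => 6*s^2*m^2 * x ^ 2 + (4*s*m^3 * x ^ 1 + m ^ 4)) gν := by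
    exact ((integrable_pow_gν 2).const_mul _).add I1
  have I3 : Integrable (fun x : ℝ => 4*s^3*m * x ^ 3
      + (6*s^2*m^2 * x ^ 2 + (4*s*m^3 * x ^ 1 + m ^ 4))) gν := by
    exact ((integrable_pow_gν 3).const_mul _).add I2
  rw [this, integral_add ((integrable_pow_gν 4).const_mul _) I3,
    integral_add ((integrable_pow_gν 3).const_mul _) I2,
    integral_add ((integrable_pow_gν 2).const_mul _) I1,
    integral_add ((integrable_pow_gν 1).const_mul _) (integrable_const _),
    integral_const_mul, integral_const_mul, integral_const_mul, integral_const_mul,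
    M1, M2, M3, M4, integral_const]
  simp only [measure_univ, probReal_univ, ENNReal.toReal_one, smul_eq_mul, one_mul, mul_zero, mul_one, add_zero,
    zero_add]
  have h4 : s ^ 4 = (v:ℝ) ^ 2 := by rw [show s^4 = (s^2)^2 by ring, hsv]
  rw [h4, hsv]
  ring

noncomputable def gρ : Measure ((ℝ × ℝ) × ℝ) := gπ.prod gν
instance : IsProbabilityMeasure gρ := by unfold gρ; infer_instance

noncomputable def trm (r : ℝ) (j k : ℕ) (e : ℝ × ℝ → ℝ) : (ℝ × ℝ) × ℝ → ℝ :=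
  fun q => r * ((q.1.1 ^ j * e q.1) * q.2 ^ k)

lemma key_int (r : ℝ) (j k : ℕ) {e : ℝ × ℝ → ℝ} (he : Measurable e) (hbd : ∀ p, |e p| ≤ 1) :
    Integrable (trm r j k e) gρ := by
  exact (((int_pow_ind j he hbd).mul_prod (integrable_pow_gν k))).const_mul r

lemma key_val (r : ℝ) (j k : ℕ) (e : ℝ × ℝ → ℝ) :
    ∫ q, trm r j k e q ∂gρ
      = r * ((∫ p, p.1 ^ j * e p ∂gπ) * (∫ z, z ^ k ∂gν)) := by
  unfold gρ trm
  rw [integral_const_mul, integral_prod_mul (μ := gπ) (ν := gν)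
    (fun p : ℝ × ℝ => p.1 ^ j * e p) (fun z : ℝ => z ^ k)]

noncomputable def Fv (ε : ℝ) : (ℝ × ℝ) × ℝ → ℝ := fun q =>
  √(1/(3-ε)) * (q.1.1 + √(2-ε) * q.2) * χ q.1 + √(1/(1+ε)) * (q.1.1 + √ε * q.2) * ψ q.1

lemma meas_F (ε : ℝ) : Measurable (Fv ε) := by
  unfold Fv
  exact ((measurable_const.mul ((measurable_fst.fst).add
      (measurable_const.mul measurable_snd))).mul (meas_χ.comp measurable_fst)).add
    ((measurable_const.mul ((measurable_fst.fst).add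
      (measurable_const.mul measurable_snd))).mul (meas_ψ.comp measurable_fst))

section Expand

variable (a b c d : ℝ) (q : (ℝ × ℝ) × ℝ)

lemma expand1 :
    a * (q.1.1 + b * q.2) * χ q.1 + c * (q.1.1 + d * q.2) * ψ q.1
      = (trm a 1 0 χ + (trm (a*b) 0 1 χ + (trm c 1 0 ψ + trm (c*d) 0 1 ψ))) q := by
  simp only [Pi.add_apply, trm]
  unfold χ ψ
  rcases lt_trichotomy q.1.1 q.1.2 with h | h | h
  · rw [if_neg (asymm h), if_pos h]; ring
  · simp only [h, lt_self_iff_false, if_false]; ring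
  · rw [if_pos h, if_neg (asymm h)]; ring

lemma expand2 :
    (a * (q.1.1 + b * q.2) * χ q.1 + c * (q.1.1 + d * q.2) * ψ q.1) ^ 2
      = (trm (a^2) 2 0 χ + (trm (2*a^2*b) 1 1 χ + (trm (a^2*b^2) 0 2 χ
        + (trm (c^2) 2 0 ψ + (trm (2*c^2*d) 1 1 ψ + trm (c^2*d^2) 0 2 ψ))))) q := by
  simp only [Pi.add_apply, trm]
  unfold χ ψ
  rcases lt_trichotomy q.1.1 q.1.2 with h | h | h
  · rw [if_neg (asymm h), if_pos h]; ring
  · simp only [h, lt_self_iff_false, if_false]; ring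
  · rw [if_pos h, if_neg (asymm h)]; ring

lemma expand4 :
    (a * (q.1.1 + b * q.2) * χ q.1 + c * (q.1.1 + d * q.2) * ψ q.1) ^ 4
      = (trm (a^4) 4 0 χ + (trm (4*a^4*b) 3 1 χ + (trm (6*a^4*b^2) 2 2 χ
        + (trm (4*a^4*b^3) 1 3 χ + (trm (a^4*b^4) 0 4 χ
        + (trm (c^4) 4 0 ψ + (trm (4*c^4*d) 3 1 ψ + (trm (6*c^4*d^2) 2 2 ψ
        + (trm (4*c^4*d^3) 1 3 ψ + trm (c^4*d^4) 0 4 ψ))))))))) q := by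
  simp only [Pi.add_apply, trm]
  unfold χ ψ
  rcases lt_trichotomy q.1.1 q.1.2 with h | h | h
  · rw [if_neg (asymm h), if_pos h]; ring
  · simp only [h, lt_self_iff_false, if_false]; ring
  · rw [if_pos h, if_neg (asymm h)]; ring

end Expand

lemma M0' : ∫ z : ℝ, z ^ 0 ∂gν = 1 := by simp

section Values

variable {ε : ℝ} (hε0 : 0 < ε) (hε1 : ε < 1)

lemma Fval1 (hε0 : 0 < ε) (hε1 : ε < 1) :
    ∫ q, Fv ε q ∂gρ
      = (√(1/(3-ε)) - √(1/(1+ε))) * ∫ p, p.1 ^ 1 * χ p ∂gπ := by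
  set a := √(1/(3-ε)); set b := √(2-ε); set c := √(1/(1+ε)); set d := √ε
  have hrw : (fun q => Fv ε q)
      = (trm a 1 0 χ + (trm (a*b) 0 1 χ + (trm c 1 0 ψ + trm (c*d) 0 1 ψ))) := by
    funext q; exact expand1 a b c d q
  rw [hrw]
  have I1 := key_int a 1 0 meas_χ abs_χ_le
  have I2 := key_int (a*b) 0 1 meas_χ abs_χ_le
  have I3 := key_int c 1 0 meas_ψ abs_ψ_le
  have I4 := key_int (c*d) 0 1 meas_ψ abs_ψ_le
  rw [integral_add' I1 (I2.add (I3.add I4)), integral_add' I2 (I3.add I4),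
    integral_add' I3 I4, key_val, key_val, key_val, key_val, M0', M1, Jψ_one]
  ring

lemma Fval2 (hε0 : 0 < ε) (hε1 : ε < 1) : ∫ q, (Fv ε q) ^ 2 ∂gρ = 1 := by
  set a := √(1/(3-ε)) with ha; set b := √(2-ε) with hb
  set c := √(1/(1+ε)) with hc; set d := √ε with hd
  have h3 : (0:ℝ) < 3 - ε := by linarith
  have h1 : (0:ℝ) < 1 + ε := by linarith
  have ha2 : a ^ 2 = 1/(3-ε) := Real.sq_sqrt (by positivity)
  have hb2 : b ^ 2 = 2-ε := Real.sq_sqrt (by linarith)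
  have hc2 : c ^ 2 = 1/(1+ε) := Real.sq_sqrt (by positivity)
  have hd2 : d ^ 2 = ε := Real.sq_sqrt hε0.le
  have hrw : (fun q => (Fv ε q) ^ 2)
      = (trm (a^2) 2 0 χ + (trm (2*a^2*b) 1 1 χ + (trm (a^2*b^2) 0 2 χ
        + (trm (c^2) 2 0 ψ + (trm (2*c^2*d) 1 1 ψ + trm (c^2*d^2) 0 2 ψ))))) := by
    funext q; exact expand2 a b c d q
  rw [hrw]
  have I1 := key_int (a^2) 2 0 meas_χ abs_χ_le
  have I2 := key_int (2*a^2*b) 1 1 meas_χ abs_χ_le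
  have I3 := key_int (a^2*b^2) 0 2 meas_χ abs_χ_le
  have I4 := key_int (c^2) 2 0 meas_ψ abs_ψ_le
  have I5 := key_int (2*c^2*d) 1 1 meas_ψ abs_ψ_le
  have I6 := key_int (c^2*d^2) 0 2 meas_ψ abs_ψ_le
  rw [integral_add' I1 (I2.add (I3.add (I4.add (I5.add I6)))),
    integral_add' I2 (I3.add (I4.add (I5.add I6))),
    integral_add' I3 (I4.add (I5.add I6)),
    integral_add' I4 (I5.add I6),
    integral_add' I5 I6,
    key_val, key_val, key_val, key_val, key_val, key_val,
    M0', M1, M2, Jχ_even 2 (by decide), Jψ_even 2 (by decide),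
    Jχ_even 0 (by decide), Jψ_even 0 (by decide), M0', M2]
  have : a^2 * (1/2*1) + (2*a^2*b * ((∫ p, p.1 ^ 1 * χ p ∂gπ) * 0)
      + (a^2*b^2 * (1/2*1) + (c^2 * (1/2*1) + (2*c^2*d * ((∫ p, p.1 ^ 1 * ψ p ∂gπ) * 0)
      + c^2*d^2 * (1/2*1))))) = (a^2*(1+b^2) + c^2*(1+d^2))/2 := by ring
  rw [this, ha2, hb2, hc2, hd2]
  field_simp
  ring

lemma Fval4 (hε0 : 0 < ε) (hε1 : ε < 1) : ∫ q, (Fv ε q) ^ 4 ∂gρ = 3 := by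
  set a := √(1/(3-ε)) with ha; set b := √(2-ε) with hb
  set c := √(1/(1+ε)) with hc; set d := √ε with hd
  have h3 : (0:ℝ) < 3 - ε := by linarith
  have h1 : (0:ℝ) < 1 + ε := by linarith
  have ha2 : a ^ 2 = 1/(3-ε) := Real.sq_sqrt (by positivity)
  have hb2 : b ^ 2 = 2-ε := Real.sq_sqrt (by linarith)
  have hc2 : c ^ 2 = 1/(1+ε) := Real.sq_sqrt (by positivity)
  have hd2 : d ^ 2 = ε := Real.sq_sqrt hε0.le
  have hrw : (fun q => (Fv ε q) ^ 4)
      = (trm (a^4) 4 0 χ + (trm (4*a^4*b) 3 1 χ + (trm (6*a^4*b^2) 2 2 χ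
        + (trm (4*a^4*b^3) 1 3 χ + (trm (a^4*b^4) 0 4 χ
        + (trm (c^4) 4 0 ψ + (trm (4*c^4*d) 3 1 ψ + (trm (6*c^4*d^2) 2 2 ψ
        + (trm (4*c^4*d^3) 1 3 ψ + trm (c^4*d^4) 0 4 ψ))))))))) := by
    funext q; exact expand4 a b c d q
  rw [hrw]
  have I1 := key_int (a^4) 4 0 meas_χ abs_χ_le
  have I2 := key_int (4*a^4*b) 3 1 meas_χ abs_χ_le
  have I3 := key_int (6*a^4*b^2) 2 2 meas_χ abs_χ_le
  have I4 := key_int (4*a^4*b^3) 1 3 meas_χ abs_χ_le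
  have I5 := key_int (a^4*b^4) 0 4 meas_χ abs_χ_le
  have I6 := key_int (c^4) 4 0 meas_ψ abs_ψ_le
  have I7 := key_int (4*c^4*d) 3 1 meas_ψ abs_ψ_le
  have I8 := key_int (6*c^4*d^2) 2 2 meas_ψ abs_ψ_le
  have I9 := key_int (4*c^4*d^3) 1 3 meas_ψ abs_ψ_le
  have I10 := key_int (c^4*d^4) 0 4 meas_ψ abs_ψ_le
  rw [integral_add' I1 (I2.add (I3.add (I4.add (I5.add (I6.add (I7.add (I8.add (I9.add I10)))))))),
    integral_add' I2 (I3.add (I4.add (I5.add (I6.add (I7.add (I8.add (I9.add I10))))))),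
    integral_add' I3 (I4.add (I5.add (I6.add (I7.add (I8.add (I9.add I10)))))),
    integral_add' I4 (I5.add (I6.add (I7.add (I8.add (I9.add I10))))),
    integral_add' I5 (I6.add (I7.add (I8.add (I9.add I10)))),
    integral_add' I6 (I7.add (I8.add (I9.add I10))),
    integral_add' I7 (I8.add (I9.add I10)),
    integral_add' I8 (I9.add I10),
    integral_add' I9 I10,
    key_val, key_val, key_val, key_val, key_val,
    key_val, key_val, key_val, key_val, key_val,
    M0', M1, M2, M3, M4,
    Jχ_even 4 (by decide), Jψ_even 4 (by decide),
    Jχ_even 2 (by decide), Jψ_even 2 (by decide),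
    Jχ_even 0 (by decide), Jψ_even 0 (by decide), M0', M2, M4]
  have ha4 : a^4 = (1/(3-ε))^2 := by rw [show a^4 = (a^2)^2 by ring, ha2]
  have hc4 : c^4 = (1/(1+ε))^2 := by rw [show c^4 = (c^2)^2 by ring, hc2]
  have hb4 : b^4 = (2-ε)^2 := by rw [show b^4 = (b^2)^2 by ring, hb2]
  have hd4 : d^4 = ε^2 := by rw [show d^4 = (d^2)^2 by ring, hd2]
  have : a^4 * (3/2*1) + (4*a^4*b * ((∫ p, p.1 ^ 3 * χ p ∂gπ) * 0)
      + (6*a^4*b^2 * (1/2*1) + (4*a^4*b^3 * ((∫ p, p.1 ^ 1 * χ p ∂gπ) * 0)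
      + (a^4*b^4 * (1/2*3) + (c^4 * (3/2*1) + (4*c^4*d * ((∫ p, p.1 ^ 3 * ψ p ∂gπ) * 0)
      + (6*c^4*d^2 * (1/2*1) + (4*c^4*d^3 * ((∫ p, p.1 ^ 1 * ψ p ∂gπ) * 0)
      + c^4*d^4 * (1/2*3)))))))))
      = (3/2) * (a^4 * (1 + 2*b^2 + b^4) + c^4 * (1 + 2*d^2 + d^4)) := by ring
  rw [this, ha4, hb2, hb4, hc4, hd2, hd4]
  have e3 : (3:ℝ) - ε ≠ 0 := ne_of_gt h3
  have e1 : (1:ℝ) + ε ≠ 0 := ne_of_gt h1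
  field_simp
  ring

end Values

end Stmt12Aux

open Stmt12Aux

/-- The non-normal limit under ε-greedy with zero margin: for `Z₁, Z₂, Z₃` i.i.d.
`N(0,1)` and `ε ∈ (0,1)`, the mixture
`Y = √(1/(3−ε))(Z₁ + √(2−ε) Z₃)·1{Z₁ > Z₂} + √(1/(1+ε))(Z₁ + √ε Z₃)·1{Z₁ < Z₂}`
has unit second moment (`E[Y²] = 1`) but is not Gaussian. -/
theorem stmt12 {Ω : Type*} [MeasurableSpace Ω] (μ : Measure Ω) [IsProbabilityMeasure μ]
    (Z₁ Z₂ Z₃ : Ω → ℝ) (h₁ : Measurable Z₁) (h₂ : Measurable Z₂) (h₃ : Measurable Z₃)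
    (hIndep : iIndepFun ![Z₁, Z₂, Z₃] μ)
    (hlaw : ∀ j : Fin 3, μ.map (![Z₁, Z₂, Z₃] j) = gaussianReal 0 1)
    (ε : ℝ) (hε : 0 < ε ∧ ε < 1)
    (Y : Ω → ℝ)
    (hY : ∀ ω, Y ω =
      Real.sqrt (1 / (3 - ε)) * (Z₁ ω + Real.sqrt (2 - ε) * Z₃ ω)
          * (if Z₁ ω > Z₂ ω then 1 else 0)
        + Real.sqrt (1 / (1 + ε)) * (Z₁ ω + Real.sqrt ε * Z₃ ω)
          * (if Z₁ ω < Z₂ ω then 1 else 0)) :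
    (∫ ω, (Y ω) ^ 2 ∂μ) = 1 ∧ ∀ (m : ℝ) (v : NNReal), μ.map Y ≠ gaussianReal m v := by
  obtain ⟨hε0, hε1⟩ := hε
  have hmeasvec : ∀ i, Measurable (![Z₁, Z₂, Z₃] i) := by
    intro i; fin_cases i <;> simpa
  have l0 : μ.map Z₁ = gν := by have := hlaw 0; simpa [gν] using this
  have l1 : μ.map Z₂ = gν := by have := hlaw 1; simpa [gν] using this
  have l2 : μ.map Z₃ = gν := by have := hlaw 2; simpa [gν] using this
  have h12 : IndepFun Z₁ Z₂ μ := by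
    have := hIndep.indepFun (i := 0) (j := 1) (by decide)
    simpa using this
  have hpair : μ.map (fun ω => (Z₁ ω, Z₂ ω)) = gπ := by
    unfold gπ
    rw [(indepFun_iff_map_prod_eq_prod_map_map h₁.aemeasurable h₂.aemeasurable).mp h12, l0, l1]
  have hprod : IndepFun (fun ω => (Z₁ ω, Z₂ ω)) Z₃ μ := by
    have := hIndep.indepFun_prodMk hmeasvec 0 1 2 (by decide) (by decide)
    simpa using this
  have hT : Measurable (fun ω => ((Z₁ ω, Z₂ ω), Z₃ ω)) := (h₁.prodMk h₂).prodMk h₃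
  have hmapT : μ.map (fun ω => ((Z₁ ω, Z₂ ω), Z₃ ω)) = gρ := by
    unfold gρ
    rw [(indepFun_iff_map_prod_eq_prod_map_map
      (h₁.prodMk h₂).aemeasurable h₃.aemeasurable).mp hprod, hpair, l2]
  have hYT : ∀ ω, Y ω = Fv ε ((Z₁ ω, Z₂ ω), Z₃ ω) := by
    intro ω; rw [hY ω]; rfl
  constructor
  · have h1 : ∫ ω, (Y ω) ^ 2 ∂μ = ∫ ω, (Fv ε ((Z₁ ω, Z₂ ω), Z₃ ω)) ^ 2 ∂μ := by
      simp only [hYT]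
    rw [h1, ← integral_map hT.aemeasurable
      ((meas_F ε).pow_const 2).aestronglyMeasurable, hmapT]
    exact Fval2 hε0 hε1
  · intro m v hg
    have hYeq : Y = fun ω => Fv ε ((Z₁ ω, Z₂ ω), Z₃ ω) := funext hYT
    have hmapY : gρ.map (Fv ε) = gaussianReal m v := by
      have hcomp : (Fv ε ∘ fun ω => ((Z₁ ω, Z₂ ω), Z₃ ω)) = Y := by rw [hYeq]; rfl
      rw [← hmapT, Measure.map_map (meas_F ε) hT, hcomp]
      exact hg
    have e1 : ∫ q, Fv ε q ∂gρ = m := by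
      rw [← integral_map (f := fun x : ℝ => x) (meas_F ε).aemeasurable
        (by fun_prop : Measurable fun x : ℝ => x).aestronglyMeasurable, hmapY, Gm1]
    have e2 : ∫ q, (Fv ε q) ^ 2 ∂gρ = m ^ 2 + v := by
      rw [← integral_map (f := fun x : ℝ => x ^ 2) (meas_F ε).aemeasurable
        (by fun_prop : Measurable fun x : ℝ => x ^ 2).aestronglyMeasurable, hmapY, Gm2]
    have e4 : ∫ q, (Fv ε q) ^ 4 ∂gρ = m ^ 4 + 6 * m ^ 2 * v + 3 * (v:ℝ) ^ 2 := by
      rw [← integral_map (f := fun x : ℝ => x ^ 4) (meas_F ε).aemeasurable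
        (by fun_prop : Measurable fun x : ℝ => x ^ 4).aestronglyMeasurable, hmapY, Gm4]
    rw [Fval1 hε0 hε1] at e1
    rw [Fval2 hε0 hε1] at e2
    rw [Fval4 hε0 hε1] at e4
    have h3p : (0:ℝ) < 3 - ε := by linarith
    have h1p : (0:ℝ) < 1 + ε := by linarith
    have hac : √(1/(3-ε)) < √(1/(1+ε)) := by
      apply Real.sqrt_lt_sqrt (by positivity)
      rw [div_lt_div_iff₀ h3p h1p]
      linarith
    have hm0 : m < 0 := by
      rw [← e1]
      have := Jχ_one_pos
      nlinarith
    have hveq : (v : ℝ) = 1 - m ^ 2 := by linarith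
    rw [hveq] at e4
    have : m ^ 4 = 0 := by nlinarith
    have : m = 0 := by
      have := pow_eq_zero_iff (n := 4) (by norm_num) |>.mp this
      exact this
    linarith
end
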